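/- arXiv:1307.1126 — 4 statements merged into one kernel-verified Lean document; each statement's English description precedes it below -/
import Mathlib

section
/- For every integer n ≥ 2 and real z with -1 ≤ z < 0, L_{(n/2)+1}(z) > L_{n/2}(z), i.e. ∑_{m=1}^∞ z^{m-1}/m^{(n/2)+1} > ∑_{m=1}^∞ z^{m-1}/m^{n/2}. -/
/-!
Put `z = -w` with `0 < w ≤ 1` and `s = n / 2 ≥ 1`. The difference of the two series is the
alternating series `∑ (-1) ^ m w ^ (m + 1) (m + 1) / (m + 2) ^ (s + 1)`, whose terms decrease
strictly because `(x / (x + 1)) ^ (s + 1) ≤ (x / (x + 1)) ^ 2 < (x - 1) / x` for `x ≥ 2`.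
Grouping an alternating series with strictly decreasing terms into consecutive pairs leaves a
series of positive terms.
-/

open Real

theorem tsum_neg_one_pow_mul_pos {b : ℕ → ℝ} (hb : StrictAnti b)
    (hsum : Summable fun m ↦ (-1) ^ m * b m) : 0 < ∑' m, (-1) ^ m * b m := by
  set f := fun m ↦ (-1 : ℝ) ^ m * b m
  have heven : Summable fun k ↦ f (2 * k) := hsum.comp_injective fun _ _ h ↦ by omega
  have hodd : Summable fun k ↦ f (2 * k + 1) := hsum.comp_injective fun _ _ h ↦ by omega
  have hpair (k : ℕ) : 0 < f (2 * k) + f (2 * k + 1) := by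
    simp only [f]
    rw [pow_succ, pow_mul, neg_one_sq, one_pow]
    linarith [hb (Nat.lt_succ_self (2 * k))]
  rw [← tsum_even_add_odd heven hodd, ← heven.tsum_add hodd]
  exact (heven.add hodd).tsum_pos (fun k ↦ (hpair k).le) 0 (hpair 0)

theorem strictAnti_pow_mul {w : ℝ} (hw₀ : 0 < w) (hw₁ : w ≤ 1) {c : ℕ → ℝ}
    (hc : StrictAnti c) (hc₀ : ∀ m, 0 ≤ c m) : StrictAnti fun m ↦ w ^ m * c m :=
  fun _ _ h ↦ mul_lt_mul' (pow_right_anti₀ hw₀.le hw₁ h.le) (hc h) (hc₀ _) (pow_pos hw₀ _)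

theorem div_add_one_rpow_succ_lt_sub_one_div_rpow {s x : ℝ} (hs : 1 ≤ s) (hx : 2 ≤ x) :
    x / (x + 1) ^ (s + 1) < (x - 1) / x ^ (s + 1) := by
  have hx₀ : 0 < x := by linarith
  have hratio : (x / (x + 1)) ^ (s + 1) ≤ (x / (x + 1)) ^ (2 : ℝ) :=
    rpow_le_rpow_of_exponent_ge (by positivity) ((div_le_one (by linarith)).2 (by linarith))
      (by linarith)
  have hsq : (x / (x + 1)) ^ (2 : ℝ) < (x - 1) / x := by
    rw [rpow_two, div_pow, div_lt_div_iff₀ (by positivity) hx₀]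
    nlinarith
  calc x / (x + 1) ^ (s + 1) = x * (x / (x + 1)) ^ (s + 1) / x ^ (s + 1) := by
        rw [div_rpow hx₀.le (by linarith)]; field_simp
    _ < x * ((x - 1) / x) / x ^ (s + 1) := by gcongr; exact hratio.trans_lt hsq
    _ = (x - 1) / x ^ (s + 1) := by field_simp

theorem strictAnti_natCast_succ_div_rpow {s : ℝ} (hs : 1 ≤ s) :
    StrictAnti fun m : ℕ ↦ ((m : ℝ) + 1) / ((m : ℝ) + 2) ^ (s + 1) :=
  strictAnti_nat_of_succ_lt fun m ↦ by
    have hm : (2 : ℝ) ≤ m + 2 := by linarith [m.cast_nonneg (α := ℝ)]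
    calc _ = ((m : ℝ) + 2) / ((m : ℝ) + 2 + 1) ^ (s + 1) := by push_cast; ring_nf
      _ < ((m : ℝ) + 2 - 1) / ((m : ℝ) + 2) ^ (s + 1) :=
        div_add_one_rpow_succ_lt_sub_one_div_rpow hs hm
      _ = _ := by ring

theorem strictAnti_one_div_natCast_succ_rpow {r : ℝ} (hr : 0 < r) :
    StrictAnti fun m : ℕ ↦ 1 / ((m : ℝ) + 1) ^ r :=
  fun a b h ↦ one_div_lt_one_div_of_lt (by positivity)
    (rpow_lt_rpow (by positivity) (by simpa using h) hr)

theorem summable_pow_div_rpow_of_abs_lt {z : ℝ} (hz : |z| < 1) {r : ℝ} (hr : 0 ≤ r) :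
    Summable fun m : ℕ ↦ z ^ m / ((m : ℝ) + 1) ^ r := by
  refine .of_norm_bounded (summable_geometric_of_lt_one (abs_nonneg z) hz) fun m ↦ ?_
  rw [norm_div, norm_pow, norm_eq_abs, norm_of_nonneg (by positivity)]
  exact div_le_self (by positivity) (one_le_rpow (by linarith [m.cast_nonneg (α := ℝ)]) hr)

theorem summable_pow_div_rpow_of_one_lt {z : ℝ} (hz : |z| ≤ 1) {r : ℝ} (hr : 1 < r) :
    Summable fun m : ℕ ↦ z ^ m / ((m : ℝ) + 1) ^ r := by
  have hp : Summable fun m : ℕ ↦ ((m : ℝ) + 1) ^ (-r) := by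
    simpa using (summable_nat_add_iff 1).mpr (summable_nat_rpow.mpr (neg_lt_neg hr))
  refine .of_norm_bounded hp fun m ↦ ?_
  have hm : (0 : ℝ) < (m : ℝ) + 1 := by positivity
  rw [norm_div, norm_pow, norm_eq_abs, norm_of_nonneg (by positivity), rpow_neg hm.le,
    div_eq_mul_inv]
  exact mul_le_of_le_one_left (by positivity) (pow_le_one₀ (abs_nonneg z) hz)

theorem not_summable_neg_one_pow_div_natCast_succ :
    ¬ Summable fun m : ℕ ↦ (-1 : ℝ) ^ m / ((m : ℝ) + 1) ^ (1 : ℝ) := by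
  rw [← summable_abs_iff]
  have habs (m : ℕ) : |(-1 : ℝ) ^ m / ((m : ℝ) + 1) ^ (1 : ℝ)| = 1 / ((m + 1 : ℕ) : ℝ) := by
    rw [rpow_one, abs_div, abs_pow, abs_neg, abs_one, one_pow, abs_of_pos (by positivity)]
    push_cast; rfl
  simp only [habs]
  exact fun h ↦ not_summable_one_div_natCast ((summable_nat_add_iff 1).mp h)

theorem tsum_neg_pow_div_rpow_pos {w : ℝ} (hw₀ : 0 < w) (hw₁ : w ≤ 1) {r : ℝ} (hr : 0 < r)
    (hsum : Summable fun m : ℕ ↦ (-w) ^ m / ((m : ℝ) + 1) ^ r) :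
    0 < ∑' m : ℕ, (-w) ^ m / ((m : ℝ) + 1) ^ r := by
  have hterm (m : ℕ) :
      (-w) ^ m / ((m : ℝ) + 1) ^ r = (-1) ^ m * (w ^ m * (1 / ((m : ℝ) + 1) ^ r)) := by
    rw [neg_pow]; ring
  simp only [hterm] at hsum ⊢
  exact tsum_neg_one_pow_mul_pos
    (strictAnti_pow_mul hw₀ hw₁ (strictAnti_one_div_natCast_succ_rpow hr) fun _ ↦ by positivity)
    hsum

theorem div_rpow_succ_sub_div_rpow (x : ℝ) {y : ℝ} (hy : 0 < y) (s : ℝ) :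
    x / y ^ (s + 1) - x / y ^ s = -(x * ((y - 1) / y ^ (s + 1))) := by
  have := rpow_pos_of_pos hy s
  rw [rpow_add hy, rpow_one]
  field_simp
  ring

theorem tsum_neg_pow_div_rpow_lt_succ {s : ℝ} (hs : 1 ≤ s) {w : ℝ} (hw₀ : 0 < w) (hw₁ : w ≤ 1)
    (hf : Summable fun m : ℕ ↦ (-w) ^ m / ((m : ℝ) + 1) ^ s)
    (hg : Summable fun m : ℕ ↦ (-w) ^ m / ((m : ℝ) + 1) ^ (s + 1)) :
    ∑' m : ℕ, (-w) ^ m / ((m : ℝ) + 1) ^ s < ∑' m : ℕ, (-w) ^ m / ((m : ℝ) + 1) ^ (s + 1) := by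
  have hdiff := hg.sub hf
  rw [← sub_pos, ← hg.tsum_sub hf, hdiff.tsum_eq_zero_add]
  have hterm (m : ℕ) :
      (-w) ^ (m + 1) / (((m + 1 : ℕ) : ℝ) + 1) ^ (s + 1)
        - (-w) ^ (m + 1) / (((m + 1 : ℕ) : ℝ) + 1) ^ s
        = (-1) ^ m * (w * (w ^ m * (((m : ℝ) + 1) / ((m : ℝ) + 2) ^ (s + 1)))) := by
    rw [div_rpow_succ_sub_div_rpow _ (by positivity), neg_pow]
    push_cast
    ring_nf
  have hsum := (summable_nat_add_iff 1).mpr hdiff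
  simp only [hterm] at hsum ⊢
  simpa using tsum_neg_one_pow_mul_pos ((strictAnti_pow_mul hw₀ hw₁
    (strictAnti_natCast_succ_div_rpow hs) fun _ ↦ by positivity).const_mul hw₀) hsum

/-- For integer `n ≥ 2` and `-1 ≤ z < 0`, `L_{(n/2)+1}(z) > L_{n/2}(z)`. -/
theorem L_succ_gt_L_of_neg (n : ℕ) (hn : 2 ≤ n) (z : ℝ) (hz0 : -1 ≤ z) (hz1 : z < 0) :
    (∑' m : ℕ, z ^ m / ((m : ℝ) + 1) ^ ((n : ℝ)/2 + 1)) >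
      ∑' m : ℕ, z ^ m / ((m : ℝ) + 1) ^ ((n : ℝ)/2) := by
  obtain ⟨w, rfl⟩ : ∃ w, z = -w := ⟨-z, (neg_neg z).symm⟩
  have hw₀ : 0 < w := by linarith
  have hw₁ : w ≤ 1 := by linarith
  have hs : 1 ≤ (n : ℝ) / 2 := by
    rw [le_div_iff₀ two_pos, one_mul]; exact_mod_cast hn
  have habs : |-w| = w := by rw [abs_neg, abs_of_pos hw₀]
  have hg := summable_pow_div_rpow_of_one_lt (habs.le.trans hw₁)
    (show 1 < (n : ℝ) / 2 + 1 by linarith)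
  by_cases hconv : w < 1 ∨ 1 < (n : ℝ) / 2
  · refine tsum_neg_pow_div_rpow_lt_succ hs hw₀ hw₁ ?_ hg
    rcases hconv with hw | hs'
    · exact summable_pow_div_rpow_of_abs_lt (habs.trans_lt hw) (by linarith)
    · exact summable_pow_div_rpow_of_one_lt (habs.le.trans hw₁) hs'
  -- At `z = -1`, `n = 2` the series `L₁(-1)` converges only conditionally, so its `tsum` is `0`.
  obtain ⟨rfl, hs₁⟩ : w = 1 ∧ (n : ℝ) / 2 = 1 := by
    push Not at hconv; exact ⟨hw₁.antisymm hconv.1, hconv.2.antisymm hs⟩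
  rw [hs₁, tsum_eq_zero_of_not_summable not_summable_neg_one_pow_div_natCast_succ]
  exact tsum_neg_pow_div_rpow_pos one_pos le_rfl (by norm_num) (hs₁ ▸ hg)
end

section
/- For real z with -0.8 ≤ z < 0, ∑_{m=1}^∞ z^{m-1}/m^{3/2} > ∑_{m=1}^∞ z^{m-1}/m^{1/2}, i.e. L_{3/2}(z) > L_{1/2}(z). -/
/-!
With `c n = n^(-3/2) - n^(-1/2) ≤ 0`, the difference `L_{3/2}(z) - L_{1/2}(z)` is
`∑ z^m c (m+1)`, whose first term vanishes. Grouping the terms `m = 2k+1, 2k+2` gives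
`z^(2k+1) (c n + z c (n+1))` with `n = 2k+2`; this is positive because `z^(2k+1) < 0` and
`|z| |c (n+1)| ≤ 4/5 |c (n+1)| < |c n|` for `n ≥ 2`, which after squaring is the polynomial
inequality `16 n^5 < 25 (n-1)^2 (n+1)^3`.
-/

open Real

theorem tsum_pos_of_pair_pos {f : ℕ → ℝ} (hf : Summable f) (h0 : 0 ≤ f 0)
    (hpair : ∀ k, 0 < f (2 * k + 1) + f (2 * k + 2)) : 0 < ∑' m, f m := by
  have hshift : Summable fun m => f (m + 1) := (summable_nat_add_iff 1).2 hf
  have hodd : Summable fun k => f (2 * k + 1) :=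
    hshift.comp_injective (mul_right_injective₀ two_ne_zero)
  have heven : Summable fun k => f (2 * k + 2) :=
    hshift.comp_injective ((add_left_injective 1).comp (mul_right_injective₀ two_ne_zero))
  calc 0 < ∑' k, (f (2 * k + 1) + f (2 * k + 2)) :=
        (hodd.add heven).tsum_pos (fun k => (hpair k).le) 0 (hpair 0)
    _ ≤ f 0 + ∑' k, (f (2 * k + 1) + f (2 * k + 2)) := le_add_of_nonneg_left h0
    _ = ∑' m, f m := by
        rw [hodd.tsum_add heven, hf.tsum_eq_zero_add]
        exact congrArg _ (tsum_even_add_odd (f := fun m => f (m + 1)) hodd heven)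

theorem summable_pow_div_add_one_rpow {z : ℝ} (hz : |z| < 1) {s : ℝ} (hs : 0 ≤ s) :
    Summable fun m : ℕ => z ^ m / ((m : ℝ) + 1) ^ s := by
  refine Summable.of_norm_bounded (summable_geometric_of_lt_one (abs_nonneg z) hz) fun m => ?_
  have hpos : 1 ≤ ((m : ℝ) + 1) ^ s := one_le_rpow (by linarith [m.cast_nonneg (α := ℝ)]) hs
  rw [norm_div, norm_pow, Real.norm_eq_abs, Real.norm_of_nonneg (by positivity)]
  exact div_le_self (by positivity) hpos

theorem one_div_rpow_three_halves_sub_one_div_sqrt {x : ℝ} (hx : 0 < x) :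
    1 / x ^ ((3 : ℝ) / 2) - 1 / x ^ ((1 : ℝ) / 2) = -((x - 1) / (x * √x)) := by
  have hsqrt : 0 < √x := sqrt_pos.2 hx
  rw [← sqrt_eq_rpow, show (3 : ℝ) / 2 = 1 + 1 / 2 by norm_num, rpow_add hx, rpow_one,
    ← sqrt_eq_rpow]
  field_simp
  ring

theorem four_fifths_mul_div_lt {x : ℝ} (hx : 2 ≤ x) :
    4 / 5 * (x / ((x + 1) * √(x + 1))) < (x - 1) / (x * √x) := by
  have hx0 : 0 < x := by linarith
  have hx1 : 0 < x + 1 := by linarith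
  rw [mul_div_assoc', div_lt_div_iff₀ (by positivity) (by positivity)]
  refine lt_of_pow_lt_pow_left₀ 2 (mul_nonneg (by linarith) (by positivity)) ?_
  simp only [mul_pow, sq_sqrt hx0.le, sq_sqrt hx1.le]
  nlinarith [mul_nonneg (mul_nonneg (sub_nonneg.2 hx) (sub_nonneg.2 hx)) (sub_nonneg.2 hx),
    mul_nonneg (sub_nonneg.2 hx) (sub_nonneg.2 hx), sub_nonneg.2 hx]

theorem pair_coeff_neg {x z : ℝ} (hx : 2 ≤ x) (hz : -(4 / 5) ≤ z) :
    1 / x ^ ((3 : ℝ) / 2) - 1 / x ^ ((1 : ℝ) / 2)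
      + z * (1 / (x + 1) ^ ((3 : ℝ) / 2) - 1 / (x + 1) ^ ((1 : ℝ) / 2)) < 0 := by
  rw [one_div_rpow_three_halves_sub_one_div_sqrt (by linarith),
    one_div_rpow_three_halves_sub_one_div_sqrt (by linarith), add_sub_cancel_right]
  have hd : 0 < x / ((x + 1) * √(x + 1)) := by
    have : 0 < x := by linarith
    positivity
  nlinarith [four_fifths_mul_div_lt hx]

/-- For `-0.8 ≤ z < 0`, `L_{3/2}(z) > L_{1/2}(z)`. -/
theorem L_three_halves_gt_L_half (z : ℝ) (hz0 : -0.8 ≤ z) (hz1 : z < 0) :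
    (∑' m : ℕ, z ^ m / ((m : ℝ) + 1) ^ ((3 : ℝ)/2)) >
      ∑' m : ℕ, z ^ m / ((m : ℝ) + 1) ^ ((1 : ℝ)/2) := by
  have hz : |z| < 1 := abs_lt.2 ⟨by linarith, by linarith⟩
  have h32 := summable_pow_div_add_one_rpow hz (s := 3 / 2) (by norm_num)
  have h12 := summable_pow_div_add_one_rpow hz (s := 1 / 2) (by norm_num)
  rw [gt_iff_lt, ← sub_pos, ← h32.tsum_sub h12]
  refine tsum_pos_of_pair_pos (h32.sub h12) (by simp) fun k => ?_
  have hx : (2 : ℝ) ≤ 2 * k + 2 := by linarith [k.cast_nonneg (α := ℝ)]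
  have hpair := mul_pos_of_neg_of_neg (Odd.pow_neg (odd_two_mul_add_one k) hz1)
    (pair_coeff_neg (z := z) hx (by linarith))
  refine hpair.trans_eq ?_
  have h1 : ((2 * k + 1 : ℕ) : ℝ) + 1 = 2 * k + 2 := by push_cast; ring
  have h2 : ((2 * k + 2 : ℕ) : ℝ) + 1 = 2 * k + 2 + 1 := by push_cast; ring
  rw [h1, h2]
  ring
end

section
/- For k < 0, the function C ↦ C · L_{n/2}(kC) is strictly monotonically increasing on [0, ∞) and tends to ∞ as C → ∞, where for negative argument L_{n/2}(z) = (2^{1-n/2}/Γ(n/2)) ∫_0^∞ e^{-r²/2} r^{n-1}/(1 - z e^{-r²/2}) dr. -/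
/-!
Up to the positive constant `2 ^ (1 - n/2) / Γ(n/2)`, `C · L_{n/2}(kC)` is
`∫₀^∞ e^{-r²/2} r^{n-1} · C / (1 - s C) dr` with `s = k e^{-r²/2} ≤ 0`. Since `C ↦ C / (1 - s C)`
is strictly increasing on `[0, ∞)`, integrating a pointwise strict inequality gives strict
monotonicity. For growth: once `-k e^{-R²/2} C ≥ 1`, the factor `C / (1 - s C)` is at least
`1 / (-2s)` for `r ∈ (1, R]`, so the integrand is at least `1 / (-2k)` there and the integral is at
least `(R - 1) / (-2k)`.
-/

open MeasureTheory Set Filter Real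

/-- Integral representation of `L_{n/2}(z)` (valid for `z ≤ 0`, in particular). -/
noncomputable def Lint (n : ℕ) (z : ℝ) : ℝ :=
  (2 ^ (1 - (n : ℝ)/2) / Real.Gamma ((n : ℝ)/2)) *
    ∫ r in Set.Ioi (0:ℝ),
      Real.exp (-r ^ 2 / 2) * r ^ (n - 1) / (1 - z * Real.exp (-r ^ 2 / 2))

lemma MeasureTheory.setIntegral_lt_setIntegral_of_forall_lt {X : Type*} [MeasurableSpace X]
    {μ : Measure X} {s : Set X} {f g : X → ℝ} (hs : MeasurableSet s) (hμs : μ s ≠ 0)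
    (hf : IntegrableOn f s μ) (hg : IntegrableOn g s μ) (hlt : ∀ x ∈ s, f x < g x) :
    ∫ x in s, f x ∂μ < ∫ x in s, g x ∂μ := by
  have hpos : 0 < ∫ x in s, (g - f) x ∂μ := by
    rw [setIntegral_pos_iff_support_of_nonneg_ae _ (hg.sub hf)]
    · have hsupp : Function.support (g - f) ∩ s = s :=
        inter_eq_right.2 fun x hx => Function.mem_support.2 (sub_pos.2 (hlt x hx)).ne'
      rwa [hsupp, pos_iff_ne_zero]
    · filter_upwards [ae_restrict_mem hs] with x hx using (sub_pos.2 (hlt x hx)).le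
  rw [Pi.sub_def, integral_sub hg hf] at hpos
  linarith

section RationalFactor

variable {s : ℝ}

lemma one_le_one_sub_mul (hs : s ≤ 0) {C : ℝ} (hC : 0 ≤ C) : 1 ≤ 1 - s * C := by
  nlinarith

lemma strictMonoOn_div_one_sub_mul (hs : s ≤ 0) :
    StrictMonoOn (fun C : ℝ => C / (1 - s * C)) (Ici 0) := by
  intro a ha b hb hab
  have ha' : 0 < 1 - s * a := by nlinarith [mem_Ici.1 ha]
  have hb' : 0 < 1 - s * b := by nlinarith [mem_Ici.1 hb]
  rw [div_lt_div_iff₀ ha' hb']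
  linarith

lemma div_one_sub_mul_le_self (hs : s ≤ 0) {C : ℝ} (hC : 0 ≤ C) : C / (1 - s * C) ≤ C :=
  div_le_self hC (one_le_one_sub_mul hs hC)

lemma inv_two_mul_neg_le_div_one_sub_mul (hs : s < 0) {C : ℝ} (h : 1 ≤ -s * C) :
    (2 * -s)⁻¹ ≤ C / (1 - s * C) := by
  rw [inv_eq_one_div, div_le_div_iff₀ (by linarith) (by linarith)]
  linarith

end RationalFactor

noncomputable def mulLintIntegrand (n : ℕ) (k C r : ℝ) : ℝ :=
  exp (-r ^ 2 / 2) * r ^ (n - 1) * (C / (1 - k * exp (-r ^ 2 / 2) * C))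

lemma mul_Lint_mul_eq (n : ℕ) (k C : ℝ) :
    C * Lint n (k * C) = 2 ^ (1 - (n : ℝ) / 2) / Gamma ((n : ℝ) / 2) *
      ∫ r in Ioi 0, mulLintIntegrand n k C r := by
  rw [Lint, mul_left_comm, ← integral_const_mul]
  congr 2 with r
  simp only [mulLintIntegrand]
  ring

section Integrand

variable (n : ℕ) {k : ℝ}

lemma mulLintIntegrand_nonneg (hk : k ≤ 0) {C r : ℝ} (hC : 0 ≤ C) (hr : 0 ≤ r) :
    0 ≤ mulLintIntegrand n k C r :=
  have hs : k * exp (-r ^ 2 / 2) ≤ 0 := mul_nonpos_of_nonpos_of_nonneg hk (exp_pos _).le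
  mul_nonneg (by positivity) (div_nonneg hC (zero_le_one.trans (one_le_one_sub_mul hs hC)))

lemma integrableOn_mulLintIntegrand (hk : k ≤ 0) {C : ℝ} (hC : 0 ≤ C) :
    IntegrableOn (mulLintIntegrand n k C) (Ioi 0) := by
  have hgauss : IntegrableOn (fun r : ℝ => r ^ (n - 1) * exp (-(1 / 2) * r ^ 2)) (Ioi 0) := by
    simpa only [rpow_natCast] using
      integrableOn_rpow_mul_exp_neg_mul_sq (b := 1 / 2) (by norm_num)
        (s := ((n - 1 : ℕ) : ℝ)) (by linarith [(Nat.cast_nonneg (n - 1) : (0 : ℝ) ≤ _)])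
  refine (hgauss.const_mul C).mono' ?_ ?_
  · refine (Continuous.mul (by fun_prop)
      (continuous_const.div (by fun_prop) fun r => ?_)).aestronglyMeasurable
    have := one_le_one_sub_mul (mul_nonpos_of_nonpos_of_nonneg hk (exp_pos (-r ^ 2 / 2)).le) hC
    linarith
  · filter_upwards [ae_restrict_mem measurableSet_Ioi] with r (hr : 0 < r)
    have hw : 0 ≤ exp (-r ^ 2 / 2) * r ^ (n - 1) := by positivity
    have hs : k * exp (-r ^ 2 / 2) ≤ 0 := mul_nonpos_of_nonpos_of_nonneg hk (exp_pos _).le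
    rw [norm_of_nonneg (mulLintIntegrand_nonneg n hk hC hr.le), mulLintIntegrand]
    calc _ ≤ exp (-r ^ 2 / 2) * r ^ (n - 1) * C :=
          mul_le_mul_of_nonneg_left (div_one_sub_mul_le_self hs hC) hw
      _ = C * (r ^ (n - 1) * exp (-(1 / 2) * r ^ 2)) := by ring_nf

lemma strictMonoOn_integral_mulLintIntegrand (hk : k ≤ 0) :
    StrictMonoOn (fun C => ∫ r in Ioi 0, mulLintIntegrand n k C r) (Ici 0) := by
  intro a ha b hb hab
  refine setIntegral_lt_setIntegral_of_forall_lt measurableSet_Ioi (by simp)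
    (integrableOn_mulLintIntegrand n hk ha) (integrableOn_mulLintIntegrand n hk hb)
    fun r (hr : 0 < r) => mul_lt_mul_of_pos_left ?_ (by positivity)
  exact strictMonoOn_div_one_sub_mul (mul_nonpos_of_nonpos_of_nonneg hk (exp_pos _).le) ha hb hab

lemma sub_one_div_le_integral_mulLintIntegrand (hk : k < 0) {R C : ℝ}
    (hC : 1 ≤ -k * exp (-R ^ 2 / 2) * C) :
    (R - 1) / (2 * -k) ≤ ∫ r in Ioi 0, mulLintIntegrand n k C r := by
  have hkR : 0 < -k * exp (-R ^ 2 / 2) := mul_pos (neg_pos.2 hk) (exp_pos _)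
  have hC0 : 0 ≤ C := (pos_of_mul_pos_right (one_pos.trans_le hC) hkR.le).le
  have hinv : 0 < (2 * -k)⁻¹ := inv_pos.2 (by linarith)
  have hint := integrableOn_mulLintIntegrand n hk.le hC0
  have hsub : Ioc 1 R ⊆ Ioi 0 := Ioc_subset_Ioi_self.trans (Ioi_subset_Ioi zero_le_one)
  have hbound : ∀ r ∈ Ioc 1 R, (2 * -k)⁻¹ ≤ mulLintIntegrand n k C r := by
    rintro r ⟨hr1, hrR⟩
    have hexp : exp (-R ^ 2 / 2) ≤ exp (-r ^ 2 / 2) := exp_le_exp.2 (by nlinarith)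
    have hs : k * exp (-r ^ 2 / 2) < 0 := mul_neg_of_neg_of_pos hk (exp_pos _)
    have hfactor := inv_two_mul_neg_le_div_one_sub_mul hs (C := C) <| hC.trans <| by
      rw [← neg_mul]
      gcongr
      linarith
    calc (2 * -k)⁻¹ ≤ r ^ (n - 1) * (2 * -k)⁻¹ :=
          le_mul_of_one_le_left hinv.le (one_le_pow₀ hr1.le)
      _ = exp (-r ^ 2 / 2) * r ^ (n - 1) * (2 * -(k * exp (-r ^ 2 / 2)))⁻¹ := by
          field_simp
      _ ≤ mulLintIntegrand n k C r := mul_le_mul_of_nonneg_left hfactor (by positivity)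
  calc (R - 1) / (2 * -k) ≤ volume.real (Ioc 1 R) • (2 * -k)⁻¹ := by
        rw [volume_real_Ioc, smul_eq_mul, div_eq_mul_inv]
        gcongr
        exact le_max_left _ _
    _ = ∫ _ in Ioc 1 R, (2 * -k)⁻¹ := (setIntegral_const _).symm
    _ ≤ ∫ r in Ioc 1 R, mulLintIntegrand n k C r :=
        setIntegral_mono_on (integrableOn_const measure_Ioc_lt_top.ne) (hint.mono_set hsub)
          measurableSet_Ioc hbound
    _ ≤ ∫ r in Ioi 0, mulLintIntegrand n k C r := by
        refine setIntegral_mono_set hint ?_ ?_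
        · filter_upwards [ae_restrict_mem measurableSet_Ioi] with r (hr : 0 < r)
          exact mulLintIntegrand_nonneg n hk.le hC0 hr.le
        · exact hsub.eventuallyLE

lemma tendsto_integral_mulLintIntegrand (hk : k < 0) :
    Tendsto (fun C => ∫ r in Ioi 0, mulLintIntegrand n k C r) atTop atTop := by
  refine tendsto_atTop.2 fun b => ?_
  have hR : (1 + 2 * -k * b - 1) / (2 * -k) = b := by
    rw [add_sub_cancel_left, mul_div_cancel_left₀ _ (by linarith)]
  have hlarge := tendsto_id.const_mul_atTop
    (mul_pos (neg_pos.2 hk) (exp_pos (-(1 + 2 * -k * b) ^ 2 / 2)))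
  filter_upwards [hlarge.eventually_ge_atTop 1] with C hC
  exact hR ▸ sub_one_div_le_integral_mulLintIntegrand n hk hC

end Integrand

/-- For `k < 0`, `C ↦ C·L_{n/2}(kC)` is strictly increasing on `[0,∞)`
and tends to `∞` as `C → ∞`. -/
theorem CL_strictMono_and_tendsto_atTop (n : ℕ) (hn : 1 ≤ n) (k : ℝ) (hk : k < 0) :
    StrictMonoOn (fun C : ℝ => C * Lint n (k * C)) (Set.Ici 0) ∧
      Filter.Tendsto (fun C : ℝ => C * Lint n (k * C)) Filter.atTop Filter.atTop := by
  have hc : 0 < 2 ^ (1 - (n : ℝ) / 2) / Gamma ((n : ℝ) / 2) :=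
    div_pos (rpow_pos_of_pos two_pos _) (Gamma_pos_of_pos (div_pos (Nat.cast_pos.2 hn) two_pos))
  simp only [mul_Lint_mul_eq]
  exact ⟨fun a ha b hb hab => mul_lt_mul_of_pos_left
      (strictMonoOn_integral_mulLintIntegrand n hk.le ha hb hab) hc,
    (tendsto_integral_mulLintIntegrand n hk).const_mul_atTop hc⟩
end

section
/- For k < 0 (fermion case) and any ρ̃ > 0, V_Ω > 0, the equation (2π)^{n/2} V_Ω C L_{n/2}(kC) = ρ̃ has exactly one solution C > 0. -/
/-!
Write `w r = e^{-r²/2} r^{n-1}` and `a r = -k e^{-r²/2} > 0`. Then `C · L_{n/2}(kC)` is a positive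
multiple of `Φ(C) = ∫₀^∞ w r · C / (1 + a r · C) dr`. Each integrand is continuous and strictly
increasing in `C` and bounded by `C · w r`, so `Φ` is continuous, strictly increasing and small
near `0`. By monotone convergence `Φ(C)` increases to `∫ w / a = ∫₀^∞ r^{n-1} / (-k) dr = ∞`, so the
intermediate value theorem gives exactly one solution.
-/

open MeasureTheory Real Set Filter Topology

section Saturation

variable {a C : ℝ}

lemma div_one_add_mul_le_self (ha : 0 ≤ a) (hC : 0 ≤ C) : C / (1 + a * C) ≤ C :=
  div_le_self hC (le_add_of_nonneg_right (mul_nonneg ha hC))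

lemma strictMonoOn_div_one_add_mul (ha : 0 ≤ a) :
    StrictMonoOn (fun C : ℝ => C / (1 + a * C)) (Ici 0) := by
  intro C₁ (h₁ : 0 ≤ C₁) C₂ (h₂ : 0 ≤ C₂) h
  rw [div_lt_div_iff₀ (by positivity) (by positivity)]
  linarith

lemma continuousAt_div_one_add_mul (ha : 0 ≤ a) (hC : 0 ≤ C) :
    ContinuousAt (fun C : ℝ => C / (1 + a * C)) C :=
  continuousAt_id.div (by fun_prop) (by positivity)

lemma tendsto_div_one_add_mul_atTop (ha : 0 < a) :
    Tendsto (fun C : ℝ => C / (1 + a * C)) atTop (𝓝 a⁻¹) := by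
  have h : Tendsto (fun C : ℝ => (C⁻¹ + a)⁻¹) atTop (𝓝 a⁻¹) := by
    simpa using (tendsto_inv_atTop_zero.add_const a).inv₀ (by simpa using ha.ne')
  refine h.congr' ?_
  filter_upwards [eventually_gt_atTop 0] with C hC
  field_simp

end Saturation

section SaturationIntegral

variable {α : Type*} [MeasurableSpace α] {μ : Measure α} {w a : α → ℝ}

noncomputable def saturationIntegral (μ : Measure α) (w a : α → ℝ) (C : ℝ) : ℝ :=
  ∫ x, w x * (C / (1 + a x * C)) ∂μ

lemma integrable_mul_div_one_add_mul (hw : Integrable w μ) (ha_meas : AEStronglyMeasurable a μ)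
    (ha : ∀ᵐ x ∂μ, 0 ≤ a x) {C : ℝ} (hC : 0 ≤ C) :
    Integrable (fun x => w x * (C / (1 + a x * C))) μ := by
  have hmeas : AEMeasurable (fun x => w x * (C / (1 + a x * C))) μ := by fun_prop
  refine (hw.norm.const_mul C).mono' hmeas.aestronglyMeasurable ?_
  filter_upwards [ha] with x hx
  have hsat : 0 ≤ C / (1 + a x * C) := by positivity
  rw [norm_mul, Real.norm_of_nonneg hsat, mul_comm]
  exact mul_le_mul_of_nonneg_right (div_one_add_mul_le_self hx hC) (norm_nonneg _)

lemma saturationIntegral_le_mul_integral (hw : Integrable w μ) (hw₀ : 0 ≤ᵐ[μ] w)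
    (ha_meas : AEStronglyMeasurable a μ) (ha : ∀ᵐ x ∂μ, 0 ≤ a x) {C : ℝ} (hC : 0 ≤ C) :
    saturationIntegral μ w a C ≤ C * ∫ x, w x ∂μ := by
  rw [← integral_const_mul]
  refine integral_mono_ae (integrable_mul_div_one_add_mul hw ha_meas ha hC)
    (hw.const_mul C) ?_
  filter_upwards [hw₀, ha] with x hwx hax
  rw [mul_comm C]
  exact mul_le_mul_of_nonneg_left (div_one_add_mul_le_self hax hC) hwx

lemma continuousOn_saturationIntegral (hw : Integrable w μ) (ha_meas : AEStronglyMeasurable a μ)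
    (ha : ∀ᵐ x ∂μ, 0 ≤ a x) :
    ContinuousOn (saturationIntegral μ w a) (Ioi 0) := by
  intro C (hC : 0 < C)
  refine (continuousAt_of_dominated (bound := fun x => 2 * C * ‖w x‖) ?_ ?_
    (hw.norm.const_mul _) ?_).continuousWithinAt
  · filter_upwards [Ioi_mem_nhds hC] with c (hc : 0 < c)
    exact (integrable_mul_div_one_add_mul hw ha_meas ha hc.le).aestronglyMeasurable
  · filter_upwards [Ioo_mem_nhds (half_lt_self hC) (by linarith : C < 2 * C)] with c hc
    have hc₀ : 0 ≤ c := by linarith [hc.1, half_pos hC]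
    filter_upwards [ha] with x hx
    have hsat : 0 ≤ c / (1 + a x * c) := by positivity
    rw [norm_mul, Real.norm_of_nonneg hsat, mul_comm]
    exact mul_le_mul_of_nonneg_right ((div_one_add_mul_le_self hx hc₀).trans hc.2.le)
      (norm_nonneg _)
  · filter_upwards [ha] with x hx
    exact continuousAt_const.mul (continuousAt_div_one_add_mul hx hC.le)

lemma strictMonoOn_saturationIntegral [NeZero μ] (hw : Integrable w μ) (hw₀ : ∀ᵐ x ∂μ, 0 < w x)
    (ha_meas : AEStronglyMeasurable a μ) (ha : ∀ᵐ x ∂μ, 0 ≤ a x) :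
    StrictMonoOn (saturationIntegral μ w a) (Ioi 0) := by
  intro C₁ (h₁ : 0 < C₁) C₂ (h₂ : 0 < C₂) h
  have hint₁ := integrable_mul_div_one_add_mul hw ha_meas ha h₁.le
  have hint₂ := integrable_mul_div_one_add_mul hw ha_meas ha h₂.le
  have hlt : ∀ᵐ x ∂μ, w x * (C₁ / (1 + a x * C₁)) < w x * (C₂ / (1 + a x * C₂)) := by
    filter_upwards [hw₀, ha] with x hwx hax
    exact mul_lt_mul_of_pos_left
      (strictMonoOn_div_one_add_mul hax (mem_Ici.2 h₁.le) (mem_Ici.2 h₂.le) h) hwx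
  refine (integral_mono_ae hint₁ hint₂ (hlt.mono fun _ => le_of_lt)).lt_of_ne fun heq => ?_
  have heq_ae := (integral_eq_iff_of_ae_le hint₁ hint₂ (hlt.mono fun _ => le_of_lt)).1 heq
  have hfalse : ∀ᵐ _ ∂μ, False := by
    filter_upwards [hlt, heq_ae] with x hx hx' using hx.ne hx'
  exact NeZero.ne μ (ae_eq_bot.1 (eventually_false_iff_eq_bot.1 hfalse))

lemma integrable_div_of_saturationIntegral_le (hw : Integrable w μ) (hw₀ : 0 ≤ᵐ[μ] w)
    (ha_meas : AEStronglyMeasurable a μ) (ha : ∀ᵐ x ∂μ, 0 < a x) {M : ℝ}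
    (hM : ∀ C, 0 < C → saturationIntegral μ w a C ≤ M) :
    Integrable (fun x => w x / a x) μ := by
  have ha' : ∀ᵐ x ∂μ, 0 ≤ a x := ha.mono fun _ h => h.le
  set f : ℕ → α → ℝ := fun N x => w x * ((N + 1 : ℝ) / (1 + a x * (N + 1)))
  have hf_int (N : ℕ) : Integrable (f N) μ :=
    integrable_mul_div_one_add_mul hw ha_meas ha' (by positivity)
  have hf_nonneg (N : ℕ) : 0 ≤ᵐ[μ] f N := by
    filter_upwards [hw₀, ha'] with x hwx hax
    exact mul_nonneg hwx (by positivity)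
  have hf_mono : ∀ᵐ x ∂μ, Monotone fun N => ENNReal.ofReal (f N x) := by
    filter_upwards [hw₀, ha'] with x hwx hax
    refine monotone_nat_of_le_succ fun N => ENNReal.ofReal_le_ofReal ?_
    refine mul_le_mul_of_nonneg_left ((strictMonoOn_div_one_add_mul hax).monotoneOn
      (mem_Ici.2 (by positivity)) (mem_Ici.2 (by positivity)) ?_) hwx
    push_cast
    linarith
  have hf_lim : ∀ᵐ x ∂μ, Tendsto (fun N => ENNReal.ofReal (f N x)) atTop
      (𝓝 (ENNReal.ofReal (w x / a x))) := by
    filter_upwards [ha] with x hax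
    have hN : Tendsto (fun N : ℕ => (N + 1 : ℝ)) atTop atTop :=
      tendsto_atTop_add_const_right _ 1 tendsto_natCast_atTop_atTop
    refine (ENNReal.continuous_ofReal.tendsto _).comp ?_
    rw [div_eq_mul_inv]
    exact ((tendsto_div_one_add_mul_atTop hax).comp hN).const_mul (w x)
  have hle : ∫⁻ x, ENNReal.ofReal (w x / a x) ∂μ ≤ ENNReal.ofReal M := by
    refine le_of_tendsto' (lintegral_tendsto_of_tendsto_of_monotone
      (fun N => (hf_int N).aemeasurable.ennreal_ofReal) hf_mono hf_lim) fun N => ?_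
    rw [← ofReal_integral_eq_lintegral_ofReal (hf_int N) (hf_nonneg N)]
    exact ENNReal.ofReal_le_ofReal (hM _ (by positivity))
  have hdiv_nonneg : 0 ≤ᵐ[μ] fun x => w x / a x := by
    filter_upwards [hw₀, ha'] with x hwx hax using div_nonneg hwx hax
  exact ⟨(show AEMeasurable (fun x => w x / a x) μ by fun_prop).aestronglyMeasurable,
    (hasFiniteIntegral_iff_ofReal hdiv_nonneg).2 (hle.trans_lt ENNReal.ofReal_lt_top)⟩

theorem existsUnique_saturationIntegral_eq (hw : Integrable w μ) (hw₀ : ∀ᵐ x ∂μ, 0 < w x)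
    (ha_meas : AEStronglyMeasurable a μ) (ha : ∀ᵐ x ∂μ, 0 < a x)
    (hdiv : ¬ Integrable (fun x => w x / a x) μ) {y : ℝ} (hy : 0 < y) :
    ∃! C, 0 < C ∧ saturationIntegral μ w a C = y := by
  have : NeZero μ := ⟨fun h => hdiv (h ▸ integrable_zero_measure)⟩
  have ha' : ∀ᵐ x ∂μ, 0 ≤ a x := ha.mono fun _ h => h.le
  have hw' : 0 ≤ᵐ[μ] w := hw₀.mono fun _ h => h.le
  have hmono := strictMonoOn_saturationIntegral hw hw₀ ha_meas ha'
  obtain ⟨C₀, hC₀, hsmall⟩ : ∃ C, 0 < C ∧ saturationIntegral μ w a C < y := by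
    set I := ∫ x, w x ∂μ
    have hI : 0 ≤ I := integral_nonneg_of_ae hw'
    refine ⟨y / (I + 1), by positivity,
      (saturationIntegral_le_mul_integral hw hw' ha_meas ha' (by positivity)).trans_lt ?_⟩
    rw [div_mul_eq_mul_div, div_lt_iff₀ (by positivity)]
    nlinarith
  obtain ⟨C₁, hC₁, hlarge⟩ : ∃ C, 0 < C ∧ y < saturationIntegral μ w a C := by
    by_contra! h
    exact hdiv (integrable_div_of_saturationIntegral_le hw hw' ha_meas ha h)
  have hlt : C₀ < C₁ := (hmono.lt_iff_lt hC₀ hC₁).1 (hsmall.trans hlarge)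
  obtain ⟨C, hC, hCy⟩ := intermediate_value_Icc hlt.le
    ((continuousOn_saturationIntegral hw ha_meas ha').mono (Icc_subset_Ioi_iff hlt.le |>.2 hC₀))
    ⟨hsmall.le, hlarge.le⟩
  have hCpos : 0 < C := hC₀.trans_le hC.1
  exact ⟨C, ⟨hCpos, hCy⟩, fun C' ⟨hC', hC'y⟩ => hmono.injOn hC' hCpos (hC'y.trans hCy.symm)⟩

end SaturationIntegral

lemma mul_Lint_eq_saturationIntegral (n : ℕ) (k C : ℝ) :
    C * Lint n (k * C) = 2 ^ (1 - (n : ℝ) / 2) / Gamma ((n : ℝ) / 2) *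
      saturationIntegral (volume.restrict (Ioi 0)) (fun r => exp (-r ^ 2 / 2) * r ^ (n - 1))
        (fun r => -k * exp (-r ^ 2 / 2)) C := by
  rw [Lint, saturationIntegral, mul_left_comm, ← integral_const_mul]
  congr 2 with r
  ring

lemma integrableOn_exp_neg_sq_div_two_mul_pow (m : ℕ) :
    IntegrableOn (fun r : ℝ => exp (-r ^ 2 / 2) * r ^ m) (Ioi 0) := by
  refine (integrableOn_rpow_mul_exp_neg_mul_sq (b := 1 / 2) (by norm_num)
    (s := m) (by linarith [m.cast_nonneg (α := ℝ)])).congr_fun (fun r _ => ?_) measurableSet_Ioi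
  simp only [rpow_natCast]
  ring_nf

lemma not_integrableOn_pow_Ioi (m : ℕ) : ¬ IntegrableOn (fun r : ℝ => r ^ m) (Ioi 0) := by
  simpa only [rpow_natCast] using not_integrableOn_Ioi_rpow m

/-- fermion case: the density equation has exactly one positive solution. -/
theorem fermion_unique_C (n : ℕ) (hn : 1 ≤ n) (k : ℝ) (hk : k < 0)
    (ρ V : ℝ) (hρ : 0 < ρ) (hV : 0 < V) :
    ∃! C : ℝ, 0 < C ∧ (2 * Real.pi) ^ ((n : ℝ)/2) * V * C * Lint n (k * C) = ρ := by
  have hn₀ : (0 : ℝ) < n := by exact_mod_cast hn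
  set c := 2 ^ (1 - (n : ℝ) / 2) / Gamma ((n : ℝ) / 2)
  have hc : 0 < c := div_pos (by positivity) (Gamma_pos_of_pos (by positivity))
  set A := (2 * π) ^ ((n : ℝ) / 2) * V * c
  have hA : 0 < A := by positivity
  have hlhs (C : ℝ) : (2 * π) ^ ((n : ℝ) / 2) * V * C * Lint n (k * C) =
      A * saturationIntegral (volume.restrict (Ioi 0)) (fun r => exp (-r ^ 2 / 2) * r ^ (n - 1))
        (fun r => -k * exp (-r ^ 2 / 2)) C := by
    rw [mul_assoc _ C, mul_Lint_eq_saturationIntegral]; ring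
  simp_rw [hlhs, mul_comm A, ← eq_div_iff hA.ne']
  have hk₀ : 0 < -k := neg_pos.2 hk
  have hdiv : ¬ IntegrableOn (fun r => exp (-r ^ 2 / 2) * r ^ (n - 1) / (-k * exp (-r ^ 2 / 2)))
      (Ioi 0) := fun h => not_integrableOn_pow_Ioi (n - 1) <|
    IntegrableOn.congr_fun (h.mul_const (-k)) (fun r _ => by field_simp [hk.ne]) measurableSet_Ioi
  have hpos (f : ℝ → ℝ) (hf : ∀ r, 0 < r → 0 < f r) : ∀ᵐ r ∂volume.restrict (Ioi 0), 0 < f r :=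
    (ae_restrict_iff' measurableSet_Ioi).2 (.of_forall hf)
  exact existsUnique_saturationIntegral_eq (integrableOn_exp_neg_sq_div_two_mul_pow _)
    (hpos _ fun r hr => by positivity) (by fun_prop) (hpos _ fun r _ => by positivity) hdiv
    (div_pos hρ hA)
end
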